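/- Let C = R + iB be a complex d×d matrix with (C ξ, ξ) ∈ Σ_θ for all ξ ∈ ℂ^d where θ ∈ [0, π/2), and suppose the antisymmetric part B_a of B is zero. Then |(R_a ξ, η)| ≤ (tan θ)((R_s ξ, ξ) + (R_s η, η)) for all ξ, η ∈ ℝ^d, where R_a and R_s are the antisymmetric and symmetric parts of R. -/
import Mathlib


open Matrix

/-- The closed sector with vertex 0 and semi-angle θ in the complex plane. -/
def sector (θ : ℝ) : Set ℂ :=
  {z | ∃ r β : ℝ, 0 ≤ r ∧ |β| ≤ θ ∧ z = r * Complex.exp (β * Complex.I)}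

lemma sector_im_le {θ : ℝ} (hθ : θ ∈ Set.Ico 0 (Real.pi / 2)) {z : ℂ}
    (hz : z ∈ sector θ) : |z.im| ≤ Real.tan θ * z.re := by
  obtain ⟨r, β, hr, hβ, rfl⟩ := hz
  have hπ := Real.pi_pos
  have hθ2 := hθ.2
  have hθ1 := hθ.1
  have hβ0 := abs_nonneg β
  have hcθ : 0 < Real.cos θ := Real.cos_pos_of_mem_Ioo ⟨by linarith, hθ2⟩
  have hre : ((r : ℂ) * Complex.exp (β * Complex.I)).re = r * Real.cos β := by
    rw [Complex.exp_mul_I]; simp [Complex.cos_ofReal_re]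
  have him : ((r : ℂ) * Complex.exp (β * Complex.I)).im = r * Real.sin β := by
    rw [Complex.exp_mul_I]; simp [Complex.sin_ofReal_re]
  rw [hre, him]
  have hsin : |Real.sin β| = Real.sin |β| := by
    rcases abs_cases β with ⟨h, h0⟩ | ⟨h, h0⟩
    · rw [h, abs_of_nonneg (Real.sin_nonneg_of_nonneg_of_le_pi h0 (by linarith [abs_le.mp hβ]))]
    · have : Real.sin β ≤ 0 := Real.sin_nonpos_of_nonpos_of_neg_pi_le (le_of_lt h0) (by
        have := (abs_le.mp hβ).1; linarith)
      rw [h, Real.sin_neg, abs_of_nonpos this]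
  have hcos : Real.cos β = Real.cos |β| := (Real.cos_abs β).symm
  have key : 0 ≤ Real.sin θ * Real.cos |β| - Real.cos θ * Real.sin |β| := by
    have h1 : 0 ≤ Real.sin (θ - |β|) :=
      Real.sin_nonneg_of_nonneg_of_le_pi (by linarith) (by linarith)
    rwa [Real.sin_sub] at h1
  rw [abs_mul, abs_of_nonneg hr, hsin, hcos, Real.tan_eq_sin_div_cos, div_mul_eq_mul_div,
    le_div_iff₀ hcθ]
  nlinarith [key, hr]

lemma expand_re (d : ℕ) (C : Matrix (Fin d) (Fin d) ℂ) (R B : Matrix (Fin d) (Fin d) ℝ)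
    (hRB : ∀ k l, C k l = (R k l : ℂ) + (B k l : ℂ) * Complex.I)
    (hB : ∀ k l, B k l = B l k) (ξ η : Fin d → ℝ) :
    (C.mulVec (fun k => (ξ k : ℂ) + (η k : ℂ) * Complex.I) ⬝ᵥ
        star (fun k => (ξ k : ℂ) + (η k : ℂ) * Complex.I)).re
      = R.mulVec ξ ⬝ᵥ ξ + R.mulVec η ⬝ᵥ η := by
  have hBsum : ∑ x, ∑ i, B x i * η i * ξ x = ∑ x, ∑ i, B x i * ξ i * η x := by
    rw [Finset.sum_comm]
    exact Finset.sum_congr rfl fun k _ => Finset.sum_congr rfl fun l _ => by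
      rw [hB l k]; ring
  simp only [dotProduct, Matrix.mulVec, Pi.star_apply, Finset.sum_mul,
      Complex.re_sum, hRB, star_add, star_mul', Complex.star_def,
      Complex.conj_ofReal, Complex.conj_I]
  have step : ∀ x : Fin d, ∀ i : Fin d,
      ((((R x i : ℂ)) + (B x i : ℂ) * Complex.I) * ((ξ i : ℂ) + (η i : ℂ) * Complex.I)
        * ((ξ x : ℂ) + (η x : ℂ) * -Complex.I)).re
      = (R x i * ξ i * ξ x + R x i * η i * η x)
        - (B x i * η i * ξ x - B x i * ξ i * η x) := by
    intro x i
    simp only [Complex.mul_re, Complex.mul_im, Complex.add_re, Complex.add_im,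
      Complex.ofReal_re, Complex.ofReal_im, Complex.I_re, Complex.I_im, Complex.neg_re,
      Complex.neg_im]
    ring
  rw [Finset.sum_congr rfl fun x _ => Finset.sum_congr rfl fun i _ => step x i]
  simp only [Finset.sum_sub_distrib, Finset.sum_add_distrib, hBsum, sub_self, sub_zero]

lemma expand_im (d : ℕ) (C : Matrix (Fin d) (Fin d) ℂ) (R B : Matrix (Fin d) (Fin d) ℝ)
    (hRB : ∀ k l, C k l = (R k l : ℂ) + (B k l : ℂ) * Complex.I)
    (ξ η : Fin d → ℝ) :
    (C.mulVec (fun k => (ξ k : ℂ) + (η k : ℂ) * Complex.I) ⬝ᵥ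
        star (fun k => (ξ k : ℂ) + (η k : ℂ) * Complex.I)).im
      = R.mulVec η ⬝ᵥ ξ - R.mulVec ξ ⬝ᵥ η + (B.mulVec ξ ⬝ᵥ ξ + B.mulVec η ⬝ᵥ η) := by
  simp only [dotProduct, Matrix.mulVec, Pi.star_apply, Finset.sum_mul,
      Complex.im_sum, hRB, star_add, star_mul', Complex.star_def,
      Complex.conj_ofReal, Complex.conj_I]
  have step : ∀ x : Fin d, ∀ i : Fin d,
      ((((R x i : ℂ)) + (B x i : ℂ) * Complex.I) * ((ξ i : ℂ) + (η i : ℂ) * Complex.I)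
        * ((ξ x : ℂ) + (η x : ℂ) * -Complex.I)).im
      = (R x i * η i * ξ x - R x i * ξ i * η x)
        + (B x i * ξ i * ξ x + B x i * η i * η x) := by
    intro x i
    simp only [Complex.mul_re, Complex.mul_im, Complex.add_re, Complex.add_im,
      Complex.ofReal_re, Complex.ofReal_im, Complex.I_re, Complex.I_im, Complex.neg_re,
      Complex.neg_im]
    ring
  rw [Finset.sum_congr rfl fun x _ => Finset.sum_congr rfl fun i _ => step x i]
  simp only [Finset.sum_sub_distrib, Finset.sum_add_distrib]

theorem stmt_3 (d : ℕ) (θ : ℝ) (hθ : θ ∈ Set.Ico 0 (Real.pi / 2))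
    (C : Matrix (Fin d) (Fin d) ℂ) (R B : Matrix (Fin d) (Fin d) ℝ)
    (hRB : ∀ k l, C k l = (R k l : ℂ) + (B k l : ℂ) * Complex.I)
    (hsec : ∀ ξ : Fin d → ℂ, C.mulVec ξ ⬝ᵥ star ξ ∈ sector θ)
    (hBa : (1 / 2 : ℝ) • (B - Bᵀ) = 0) :
    ∀ ξ η : Fin d → ℝ,
      |((1 / 2 : ℝ) • (R - Rᵀ)).mulVec ξ ⬝ᵥ η| ≤
      Real.tan θ *
        ((((1 / 2 : ℝ) • (R + Rᵀ)).mulVec ξ ⬝ᵥ ξ)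
          + (((1 / 2 : ℝ) • (R + Rᵀ)).mulVec η ⬝ᵥ η)) := by
  intro ξ η
  -- B is symmetric
  have hB : ∀ k l, B k l = B l k := by
    intro k l
    have h : B - Bᵀ = 0 := by
      have := congrArg (fun M => (2 : ℝ) • M) hBa
      simpa [smul_smul] using this
    have := congrFun (congrFun h k) l
    simp [Matrix.transpose_apply, sub_eq_zero] at this
    exact this
  have hT : ∀ u v : Fin d → ℝ, Rᵀ.mulVec u ⬝ᵥ v = R.mulVec v ⬝ᵥ u := by
    intro u v
    rw [Matrix.mulVec_transpose, ← Matrix.dotProduct_mulVec, dotProduct_comm]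
  set a : ℝ := R.mulVec η ⬝ᵥ ξ - R.mulVec ξ ⬝ᵥ η with ha
  set b : ℝ := B.mulVec ξ ⬝ᵥ ξ + B.mulVec η ⬝ᵥ η with hb
  set S : ℝ := R.mulVec ξ ⬝ᵥ ξ + R.mulVec η ⬝ᵥ η with hS
  have h1 := sector_im_le hθ (hsec (fun k => (ξ k : ℂ) + (η k : ℂ) * Complex.I))
  have h2 := sector_im_le hθ (hsec (fun k => (ξ k : ℂ) + ((-η) k : ℂ) * Complex.I))
  rw [expand_re d C R B hRB hB ξ η, expand_im d C R B hRB ξ η] at h1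
  rw [expand_re d C R B hRB hB ξ (-η), expand_im d C R B hRB ξ (-η)] at h2
  simp only [Matrix.mulVec_neg, neg_dotProduct, dotProduct_neg, neg_neg] at h2
  have h1' : -(Real.tan θ * S) ≤ a + b ∧ a + b ≤ Real.tan θ * S := abs_le.mp h1
  have h2' : -(Real.tan θ * S) ≤ -a + b ∧ -a + b ≤ Real.tan θ * S := by
    have : -(R.mulVec η ⬝ᵥ ξ) - -(R.mulVec ξ ⬝ᵥ η) + (B.mulVec ξ ⬝ᵥ ξ + B.mulVec η ⬝ᵥ η)
        = -a + b := by rw [ha, hb]; ring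
    rw [this] at h2
    exact abs_le.mp h2
  -- rewrite the goal
  have hL : ((1 / 2 : ℝ) • (R - Rᵀ)).mulVec ξ ⬝ᵥ η = -a / 2 := by
    rw [Matrix.smul_mulVec, smul_dotProduct, Matrix.sub_mulVec,
      sub_dotProduct, hT ξ η, ha, smul_eq_mul]
    ring
  have hR1 : ((1 / 2 : ℝ) • (R + Rᵀ)).mulVec ξ ⬝ᵥ ξ = R.mulVec ξ ⬝ᵥ ξ := by
    rw [Matrix.smul_mulVec, smul_dotProduct, Matrix.add_mulVec,
      add_dotProduct, hT ξ ξ, smul_eq_mul]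
    ring
  have hR2 : ((1 / 2 : ℝ) • (R + Rᵀ)).mulVec η ⬝ᵥ η = R.mulVec η ⬝ᵥ η := by
    rw [Matrix.smul_mulVec, smul_dotProduct, Matrix.add_mulVec,
      add_dotProduct, hT η η, smul_eq_mul]
    ring
  rw [hL, hR1, hR2]
  rcases abs_cases (-a / 2) with ⟨h, _⟩ | ⟨h, _⟩ <;> rw [h] <;>
    · rw [hS] at h1' h2'
      linarith [h1'.1, h1'.2, h2'.1, h2'.2]
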